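/- Let ā^{αβ} be symmetric positive definite and 0 ≤ ν < 1. Then the quadratic form ε ↦ H^{αβγδ} ε_{αβ} ε_{γδ} with H^{αβγδ} = ν ā^{αβ}ā^{γδ} + ((1−ν)/2)(ā^{αγ}ā^{βδ} + ā^{αδ}ā^{βγ}) is positive semidefinite on symmetric 2×2 tensors ε, and positive definite if ν ≥ 0 and ε ≠ 0. -/
import Mathlib


open Matrix

lemma key_lemma (a b c ν x y z Qv : ℝ) (hd : 0 < a*c - b^2)
    (hν0 : 0 ≤ ν) (hν1 : ν < 1)
    (hQv : a^2 * Qv = ν*(a*(a*x+2*b*y+c*z))^2 +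
      (1-ν)*((a^2*x+2*a*b*y+b^2*z)^2 + (a*c-b^2)*(2*(a*y+b*z)^2 + (a*c-b^2)*z^2))) :
    0 ≤ Qv ∧ (¬(x = 0 ∧ y = 0 ∧ z = 0) → 0 < Qv) := by
  have ha2 : 0 < a^2 := by nlinarith [sq_nonneg b, sq_nonneg a, sq_nonneg c]
  have h1 : (0:ℝ) < 1 - ν := by linarith
  have t1 : 0 ≤ ν * (a*(a*x+2*b*y+c*z))^2 := mul_nonneg hν0 (sq_nonneg _)
  have t2 : 0 ≤ (1-ν) * (a^2*x+2*a*b*y+b^2*z)^2 := mul_nonneg h1.le (sq_nonneg _)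
  have t3 : 0 ≤ (1-ν) * ((a*c-b^2) * (2*(a*y+b*z)^2)) := by positivity
  have t4 : 0 ≤ (1-ν) * ((a*c-b^2) * ((a*c-b^2)*z^2)) := by positivity
  constructor
  · have hA : 0 ≤ a^2 * Qv := by linarith [t1, t2, t3, t4]
    nlinarith [hA, ha2]
  · intro hne
    have hpos : 0 < a^2 * Qv := by
      by_cases hz : z = 0
      · by_cases hy : y = 0
        · have hx : x ≠ 0 := by tauto
          have t2' : 0 < (1-ν) * (a^2*x+2*a*b*y+b^2*z)^2 := by
            rw [hz, hy]
            have : a^2*x+2*a*b*0+b^2*0 = a^2*x := by ring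
            rw [this]
            have : a^2*x ≠ 0 := by positivity
            positivity
          linarith [t1, t2', t3, t4]
        · have t3' : 0 < (1-ν) * ((a*c-b^2) * (2*(a*y+b*z)^2)) := by
            rw [hz]
            have h' : a*y+b*0 = a*y := by ring
            rw [h']
            have ha : a ≠ 0 := by intro h; rw [h] at ha2; simp at ha2
            have : a*y ≠ 0 := mul_ne_zero ha hy
            positivity
          linarith [t1, t2, t3', t4]
      · have t4' : 0 < (1-ν) * ((a*c-b^2) * ((a*c-b^2)*z^2)) := by positivity
        linarith [t1, t2, t3, t4']
    nlinarith [hpos, ha2]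

theorem stmt_13 (ab : Matrix (Fin 2) (Fin 2) ℝ) (hpd : ab.PosDef)
    (ν : ℝ) (hν0 : 0 ≤ ν) (hν1 : ν < 1)
    (H : Fin 2 → Fin 2 → Fin 2 → Fin 2 → ℝ)
    (hH : ∀ α β γ δ, H α β γ δ =
      ν * ab α β * ab γ δ + (1 - ν) / 2 * (ab α γ * ab β δ + ab α δ * ab β γ))
    (Q : Matrix (Fin 2) (Fin 2) ℝ → ℝ)
    (hQ : Q = fun ε => ∑ α, ∑ β, ∑ γ, ∑ δ, H α β γ δ * ε α β * ε γ δ) :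
    ∀ ε : Matrix (Fin 2) (Fin 2) ℝ, ε.IsSymm → (0 ≤ Q ε ∧ (ε ≠ 0 → 0 < Q ε)) := by
  intro ε hε
  set a := ab 0 0 with ha
  set b := ab 0 1 with hb
  set c := ab 1 1 with hc
  have hba : ab 1 0 = b := by
    have := hpd.1.apply 1 0
    simpa using this.symm
  have hεs : ε 1 0 = ε 0 1 := hε.apply 0 1
  set x := ε 0 0 with hx
  set y := ε 0 1 with hy
  set z := ε 1 1 with hz
  have hdet : 0 < a*c - b^2 := by
    have := hpd.det_pos
    rw [Matrix.det_fin_two, hba] at this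
    nlinarith [this]
  have hQε : Q ε = ν*(a*x+2*b*y+c*z)^2 +
      (1-ν)*((a*x+2*b*y+c*z)^2 - 2*(a*c-b^2)*(x*z-y^2)) := by
    rw [hQ]
    simp only [Fin.sum_univ_two, hH, hba, hεs]
    ring
  have hkey : a^2 * Q ε = ν*(a*(a*x+2*b*y+c*z))^2 +
      (1-ν)*((a^2*x+2*a*b*y+b^2*z)^2 + (a*c-b^2)*(2*(a*y+b*z)^2 + (a*c-b^2)*z^2)) := by
    rw [hQε]; ring
  obtain ⟨h1, h2⟩ := key_lemma a b c ν x y z (Q ε) hdet hν0 hν1 hkey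
  refine ⟨h1, fun hne => h2 ?_⟩
  rintro ⟨hx0, hy0, hz0⟩
  apply hne
  ext i j
  fin_cases i <;> fin_cases j <;>
    simp [← hx, ← hy, ← hz, hx0, hy0, hz0, hεs]
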